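/- In a primal fuzzy topological space (Y, T, P), the family T^⋄ = {μ ∈ [0,1]^Y : Cl^⋄(μ̄) = μ̄}, where Cl^⋄(λ) = λ ∪ λ^⋄, is a Chang fuzzy topology on Y containing T (the primal fuzzy topology is finer than T). -/
import Mathlib


open unitInterval

noncomputable section

instance : Fact ((0:ℝ) ≤ 1) := ⟨zero_le_one⟩

variable {Y : Type*}

/-- Łukasiewicz disjunction of fuzzy sets: `(μ ⊕ ν)(y) = min (μ y + ν y) 1`. -/
def fOplus (μ ν : Y → I) : Y → I := fun y =>
  ⟨min ((μ y : ℝ) + (ν y : ℝ)) 1,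
    ⟨le_min (add_nonneg (μ y).2.1 (ν y).2.1) zero_le_one, min_le_right _ _⟩⟩

/-- Fuzzy complement: `μ̄ y = 1 - μ y`. -/
def fCompl (μ : Y → I) : Y → I := fun y => symm (μ y)

/-- A fuzzy primal on `Y`. -/
def IsFuzzyPrimal (P : Set (Y → I)) : Prop :=
  (fun _ => 1) ∉ P ∧
  (∀ μ ∈ P, ∀ ν : Y → I, (∀ y, ν y ≤ μ y) → ν ∈ P) ∧
  (∀ μ ν : Y → I, (fun y => min (μ y) (ν y)) ∈ P → μ ∈ P ∨ ν ∈ P)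

/-- A Chang fuzzy topology on `Y`. -/
def IsChang (T : Set (Y → I)) : Prop :=
  (fun _ => 0) ∈ T ∧ (fun _ => 1) ∈ T ∧
  (∀ μ ∈ T, ∀ ν ∈ T, (fun y => min (μ y) (ν y)) ∈ T) ∧
  (∀ S : Set (Y → I), S ⊆ T → (fun y => ⨆ μ : S, (μ : Y → I) y) ∈ T)

/-- Open q-neighborhoods of the fuzzy point `y_t`: open `ν` with `t + ν y > 1`. -/
def Qnbhd (T : Set (Y → I)) (y : Y) (t : I) : Set (Y → I) :=
  {ν | ν ∈ T ∧ 1 < (t : ℝ) + (ν y : ℝ)}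

/-- The diamond operator: `λ^⋄ y = sup {t ∈ (0,1] | ∀ ν ∈ Q(y_t), λ̄ ⊕ ν̄ ∈ P}`. -/
def fDiam (T P : Set (Y → I)) (lam : Y → I) : Y → I := fun y =>
  sSup {t : I | 0 < t ∧ ∀ ν ∈ Qnbhd T y t, fOplus (fCompl lam) (fCompl ν) ∈ P}

/-- `Cl^⋄(λ) = λ ∪ λ^⋄` (pointwise max). -/
def fClDiam (T P : Set (Y → I)) (lam : Y → I) : Y → I := fun y =>
  max (lam y) (fDiam T P lam y)


-- Auxiliary lemmas

lemma coe_min' (a b : I) : ((min a b : I) : ℝ) = min (a:ℝ) (b:ℝ) := by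
  rcases le_total a b with h|h
  · rw [min_eq_left h, min_eq_left (Subtype.coe_le_coe.2 h)]
  · rw [min_eq_right h, min_eq_right (Subtype.coe_le_coe.2 h)]

lemma coe_max' (a b : I) : ((max a b : I) : ℝ) = max (a:ℝ) (b:ℝ) := by
  rcases le_total a b with h|h
  · rw [max_eq_right h, max_eq_right (Subtype.coe_le_coe.2 h)]
  · rw [max_eq_left h, max_eq_left (Subtype.coe_le_coe.2 h)]

lemma le_symm_comm' {a b : I} : a ≤ σ b ↔ b ≤ σ a := by
  constructor <;> intro h <;> rw [← Subtype.coe_le_coe] at h ⊢ <;>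
    simp only [coe_symm_eq] at h ⊢ <;> linarith

lemma mem_iff (T P : Set (Y → I)) (μ : Y → I) :
    fClDiam T P (fCompl μ) = fCompl μ ↔ ∀ y, fDiam T P (fCompl μ) y ≤ fCompl μ y := by
  constructor
  · intro h y
    have := congrFun h y
    simp only [fClDiam] at this
    rw [← this]; exact le_max_right _ _
  · intro h; funext y; exact max_eq_left (h y)

lemma fDiam_mono (T P : Set (Y → I)) (hP : IsFuzzyPrimal P) (lam lam' : Y → I)
    (h : ∀ y, lam y ≤ lam' y) (y : Y) : fDiam T P lam y ≤ fDiam T P lam' y := by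
  apply sSup_le_sSup
  rintro t ⟨ht0, ht⟩
  refine ⟨ht0, fun ν hν => ?_⟩
  refine hP.2.1 _ (ht ν hν) _ (fun z => ?_)
  rw [← Subtype.coe_le_coe]
  show min ((σ (lam' z) : ℝ) + (σ (ν z) : ℝ)) 1 ≤ min ((σ (lam z) : ℝ) + (σ (ν z) : ℝ)) 1
  have := Subtype.coe_le_coe.2 (h z)
  simp only [coe_symm_eq]
  apply min_le_min _ le_rfl
  linarith

lemma mem_of_openT (T P : Set (Y → I)) (hT : IsChang T) (hP : IsFuzzyPrimal P)
    {μ : Y → I} (hμ : μ ∈ T) : fClDiam T P (fCompl μ) = fCompl μ := by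
  rw [mem_iff]
  intro y
  apply sSup_le
  rintro t ⟨ht0, ht⟩
  rw [← Subtype.coe_le_coe]
  simp only [fCompl, coe_symm_eq]
  by_contra hc
  push_neg at hc
  have hq : μ ∈ Qnbhd T y t := ⟨hμ, by linarith⟩
  have hmem := ht μ hq
  have heq : fOplus (fCompl (fCompl μ)) (fCompl μ) = (fun _ => 1) := by
    funext z
    apply Subtype.ext
    show min ((σ (σ (μ z)) : ℝ) + (σ (μ z) : ℝ)) 1 = 1
    simp only [coe_symm_eq]
    rw [min_eq_right]
    linarith
  rw [heq] at hmem
  exact hP.1 hmem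

theorem primalFuzzyTopology (T P : Set (Y → I)) (hT : IsChang T) (hP : IsFuzzyPrimal P) :
    IsChang {μ : Y → I | fClDiam T P (fCompl μ) = fCompl μ} ∧
    T ⊆ {μ : Y → I | fClDiam T P (fCompl μ) = fCompl μ} := by
  constructor
  · refine ⟨?_, ?_, ?_, ?_⟩
    · -- 0 ∈ T⋄
      show fClDiam T P (fCompl fun _ => 0) = (fCompl fun _ => 0)
      rw [mem_iff]
      intro y
      show fDiam T P _ y ≤ σ 0
      rw [symm_zero]
      exact le_one'
    · -- 1 ∈ T⋄
      show fClDiam T P (fCompl fun _ => 1) = (fCompl fun _ => 1)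
      rw [mem_iff]
      intro y
      apply sSup_le
      rintro t ⟨ht0, ht⟩
      exfalso
      have h1 : (fun _ : Y => (1:I)) ∈ Qnbhd T y t := by
        refine ⟨hT.2.1, ?_⟩
        have h0 : (0:ℝ) < t := ht0
        simp only [Set.Icc.coe_one]
        linarith
      have hmem := ht _ h1
      have heq : fOplus (fCompl (fCompl fun _ : Y => (1:I))) (fCompl fun _ : Y => (1:I)) = (fun _ : Y => (1:I)) := by
        funext z
        apply Subtype.ext
        show min ((σ (σ 1) : ℝ) + (σ (1:I) : ℝ)) 1 = 1
        simp [coe_symm_eq]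
      rw [heq] at hmem
      exact hP.1 hmem
    · -- binary min
      intro μ hμ ν hν
      simp only [Set.mem_setOf_eq] at hμ hν ⊢
      rw [mem_iff] at hμ hν ⊢
      intro y
      have hcompl : fCompl (fun z => min (μ z) (ν z)) = fun z => max (fCompl μ z) (fCompl ν z) := by
        funext z
        apply Subtype.ext
        rw [coe_max']
        simp only [fCompl, coe_symm_eq, coe_min']
        rcases le_total ((μ z : ℝ)) ((ν z : ℝ)) with h|h
        · rw [min_eq_left h, max_eq_left (by linarith)]
        · rw [min_eq_right h, max_eq_right (by linarith)]
      rw [hcompl]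
      have key : fDiam T P (fun z => max (fCompl μ z) (fCompl ν z)) y ≤
          max (fDiam T P (fCompl μ) y) (fDiam T P (fCompl ν) y) := by
        apply sSup_le
        rintro t ⟨ht0, ht⟩
        set S₁ := {s : I | 0 < s ∧ ∀ w ∈ Qnbhd T y s, fOplus (fCompl (fCompl μ)) (fCompl w) ∈ P}
          with hS₁
        set S₂ := {s : I | 0 < s ∧ ∀ w ∈ Qnbhd T y s, fOplus (fCompl (fCompl ν)) (fCompl w) ∈ P}
          with hS₂
        have hmem : t ∈ S₁ ∨ t ∈ S₂ := by
          by_contra hc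
          push_neg at hc
          obtain ⟨h1, h2⟩ := hc
          rw [hS₁, Set.mem_setOf_eq, not_and] at h1
          rw [hS₂, Set.mem_setOf_eq, not_and] at h2
          push_neg at h1 h2
          obtain ⟨w₁, hw₁, hp₁⟩ := h1 ht0
          obtain ⟨w₂, hw₂, hp₂⟩ := h2 ht0
          set w := fun z => min (w₁ z) (w₂ z) with hw
          have hwT : w ∈ T := hT.2.2.1 _ hw₁.1 _ hw₂.1
          have hwQ : w ∈ Qnbhd T y t := by
            refine ⟨hwT, ?_⟩
            have e : ((w y : I) : ℝ) = min ((w₁ y : ℝ)) ((w₂ y : ℝ)) := coe_min' _ _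
            rw [e]
            rcases le_total ((w₁ y : ℝ)) ((w₂ y : ℝ)) with h|h
            · rw [min_eq_left h]; exact hw₁.2
            · rw [min_eq_right h]; exact hw₂.2
          have hmemP := ht w hwQ
          have hle : ∀ z, min (fOplus (fCompl (fCompl μ)) (fCompl w₁) z)
              (fOplus (fCompl (fCompl ν)) (fCompl w₂) z) ≤
              fOplus (fCompl (fun z => max (fCompl μ z) (fCompl ν z))) (fCompl w) z := by
            intro z
            rw [← Subtype.coe_le_coe, coe_min']
            show min (min ((σ (σ (μ z)) : ℝ) + (σ (w₁ z) : ℝ)) 1)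
                     (min ((σ (σ (ν z)) : ℝ) + (σ (w₂ z) : ℝ)) 1) ≤
                 min ((σ (max (fCompl μ z) (fCompl ν z)) : ℝ) + (σ (w z) : ℝ)) 1
            simp only [coe_symm_eq, coe_max', coe_min', fCompl, hw, sub_sub_cancel]
            set a := ((μ z : I) : ℝ) with ha
            set c := ((ν z : I) : ℝ) with hc2
            set b := 1 - ((w₁ z : I) : ℝ) with hb
            set d := 1 - ((w₂ z : I) : ℝ) with hd
            have e1 : 1 - max (1 - a) (1 - c) = min a c := by
              rcases le_total a c with h|h
              · rw [min_eq_left h, max_eq_left (by linarith)]; ring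
              · rw [min_eq_right h, max_eq_right (by linarith)]; ring
            have e2 : 1 - min (((w₁ z : I)) : ℝ) (((w₂ z : I)) : ℝ) = max b d := by
              rcases le_total (((w₁ z : I)) : ℝ) (((w₂ z : I)) : ℝ) with h|h
              · rw [min_eq_left h, max_eq_left (by rw [hb, hd]; linarith)]
              · rw [min_eq_right h, max_eq_right (by rw [hb, hd]; linarith)]
            rw [e1, e2]
            rcases le_total a c with h|h
            · calc min (min (a+b) 1) (min (c+d) 1) ≤ min (a+b) 1 := min_le_left _ _
                _ ≤ min (min a c + max b d) 1 := by
                    apply min_le_min _ le_rfl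
                    rw [min_eq_left h]
                    have := le_max_left b d; linarith
            · calc min (min (a+b) 1) (min (c+d) 1) ≤ min (c+d) 1 := min_le_right _ _
                _ ≤ min (min a c + max b d) 1 := by
                    apply min_le_min _ le_rfl
                    rw [min_eq_right h]
                    have := le_max_right b d; linarith
          have hminP : (fun z => min (fOplus (fCompl (fCompl μ)) (fCompl w₁) z)
              (fOplus (fCompl (fCompl ν)) (fCompl w₂) z)) ∈ P :=
            hP.2.1 _ hmemP _ hle
          rcases hP.2.2 _ _ hminP with h|h
          · exact hp₁ h
          · exact hp₂ h
        rcases hmem with h|h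
        · exact le_max_of_le_left (le_sSup h)
        · exact le_max_of_le_right (le_sSup h)
      refine le_trans key ?_
      exact max_le_max (hμ y) (hν y)
    · -- arbitrary sup
      intro S hS
      simp only [Set.mem_setOf_eq]
      rw [mem_iff]
      intro y
      set μ : Y → I := fun z => ⨆ g : S, (g : Y → I) z with hμdef
      have hle : ∀ g : S, ∀ z, fCompl μ z ≤ fCompl (g : Y → I) z := by
        intro g z
        rw [← Subtype.coe_le_coe]
        simp only [fCompl, coe_symm_eq]
        have h1 : (g : Y → I) z ≤ μ z := le_iSup (fun g : S => (g : Y → I) z) g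
        have h2 := Subtype.coe_le_coe.2 h1
        linarith
      have hd : ∀ g : S, fDiam T P (fCompl μ) y ≤ σ ((g : Y → I) y) := by
        intro g
        have h1 := fDiam_mono T P hP _ _ (hle g) y
        have h2 := (mem_iff T P (g : Y → I)).1 (hS g.2) y
        exact le_trans h1 h2
      have hsup : μ y ≤ σ (fDiam T P (fCompl μ) y) :=
        iSup_le (fun g => le_symm_comm'.1 (hd g))
      exact le_symm_comm'.1 hsup
  · intro μ hμ
    exact mem_of_openT T P hT hP hμ
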